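/- Let m_2, m_3 be positive integers. Then (c_1^{m_2,m_3})^2 < 4 c_0^{m_2,m_3} c_2^{m_2,m_3}. -/
import Mathlib

/-- `P k = (k+1/2)(k-1/2)⋯(3/2)(1/2) = (2k+1)!!/2^(k+1)`. -/
noncomputable def P (k : ℕ) : ℝ := ∏ i ∈ Finset.range (k + 1), ((i : ℝ) + 1 / 2)

/-- The combinatorial coefficient `c_p^{m₂,m₃}` from the paper. -/
noncomputable def c (m2 m3 p : ℕ) : ℝ :=
  (∑ i ∈ Finset.Icc (p - m2) (min m2 p),
      ((2 : ℝ) ^ (2 * i) * P (m3 + i)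
            / ((Nat.factorial (2 * i)) * (Nat.factorial (m2 - i)))
        - P (m3 - 1) / (2 * (Nat.factorial i) * (Nat.factorial (m2 - i)))) *
      ((2 : ℝ) ^ (2 * (p : ℤ) - 2 * (i : ℤ) - 1)
            * (2 * (m2 : ℝ) + 2 * (i : ℝ) - 2 * (p : ℝ) + 1) * P (m3 + p - i - 1)
            / ((Nat.factorial (2 * p - 2 * i)) * (Nat.factorial (m2 + i - p)))
        - P (m3 - 1) / (2 * (Nat.factorial (p - i)) * (Nat.factorial (m2 + i - p)))))
  - ∑ i ∈ Finset.Ico (p - m2) (min m2 p),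
      (2 : ℝ) ^ (2 * p) * P (m3 + i) * P (m3 + p - i - 1)
        / ((Nat.factorial (2 * i + 1)) * (Nat.factorial (2 * p - 2 * i - 1))
            * (Nat.factorial (m2 - i - 1)) * (Nat.factorial (m2 + i - p)))

lemma P_succ (k : ℕ) : P (k + 1) = P k * ((k : ℝ) + 3 / 2) := by
  unfold P
  rw [Finset.prod_range_succ]
  push_cast; ring

lemma P_pos (k : ℕ) : 0 < P k := by
  unfold P
  exact Finset.prod_pos (fun i _ => by positivity)

lemma L0 (a b : ℕ) :
    c (a + 1) (b + 1) 0 = P b ^ 2 * (((a:ℝ)+1) * ((b:ℝ)+1)) / ((a+1).factorial : ℝ)^2 := by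
  have h1 : 0 - (a+1) = 0 := by omega
  have h2 : min (a+1) 0 = 0 := by omega
  rw [c, h1, h2]
  rw [show Finset.Icc 0 0 = {0} from rfl, show Finset.Ico (0:ℕ) 0 = ∅ from rfl]
  rw [Finset.sum_singleton, Finset.sum_empty]
  norm_num [Nat.factorial_succ, P_succ]
  have hf : ((a.factorial : ℝ)) ≠ 0 := by positivity
  field_simp
  ring

lemma L1 (a b : ℕ) :
    c (a + 1) (b + 1) 1 = P b ^ 2 *
      (((b:ℝ)+1) * ((a:ℝ)^2 - (a:ℝ)*(b:ℝ) - 1 - (b:ℝ))) / ((a+1).factorial : ℝ)^2 := by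
  have h1 : 1 - (a+1) = 0 := by omega
  have h2 : min (a+1) 1 = 1 := by omega
  rw [c, h1, h2]
  rw [show Finset.Icc 0 1 = {0, 1} from rfl, show Finset.Ico 0 1 = {0} from rfl]
  rw [Finset.sum_pair (by norm_num), Finset.sum_singleton]
  norm_num [Nat.factorial_succ, P_succ]
  have hf : ((a.factorial : ℝ)) ≠ 0 := by positivity
  field_simp
  ring

lemma L2a (b : ℕ) :
    c 1 (b + 1) 2 = P b ^ 2 *
      (7 + 15*(b:ℝ) + 10*(b:ℝ)^2 + 2*(b:ℝ)^3) := by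
  have h1 : 2 - 1 = 1 := by omega
  have h2 : min 1 2 = 1 := by omega
  rw [c, h1, h2]
  rw [show Finset.Icc 1 1 = {1} from rfl, show Finset.Ico 1 1 = ∅ from rfl]
  rw [Finset.sum_singleton, Finset.sum_empty]
  norm_num [Nat.factorial_succ, P_succ]
  ring

set_option maxHeartbeats 2000000 in
lemma L2b (a b : ℕ) :
    c (a + 2) (b + 1) 2 = P b ^ 2 *
      (28 + 56*(b:ℝ) + 34*(b:ℝ)^2 + 6*(b:ℝ)^3
        + 32*(a:ℝ) + 60*(a:ℝ)*(b:ℝ) + 33*(a:ℝ)*(b:ℝ)^2 + 5*(a:ℝ)*(b:ℝ)^3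
        + 13*(a:ℝ)^2 + 22*(a:ℝ)^2*(b:ℝ) + 10*(a:ℝ)^2*(b:ℝ)^2 + (a:ℝ)^2*(b:ℝ)^3
        + 2*(a:ℝ)^3 + 3*(a:ℝ)^3*(b:ℝ) + (a:ℝ)^3*(b:ℝ)^2) / ((a+2).factorial : ℝ)^2 := by
  have h1 : 2 - (a+2) = 0 := by omega
  have h2 : min (a+2) 2 = 2 := by omega
  rw [c, h1, h2]
  rw [show Finset.Icc 0 2 = {0, 1, 2} from rfl, show Finset.Ico 0 2 = {0, 1} from rfl]
  rw [show ({0,1,2} : Finset ℕ) = insert 0 {1,2} from rfl,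
      Finset.sum_insert (by decide), Finset.sum_pair (by norm_num),
      Finset.sum_pair (by norm_num)]
  norm_num [Nat.factorial_succ, P_succ]
  rw [show a + 2 + 1 - 2 = a + 1 from by omega]
  norm_num [Nat.factorial_succ]
  have hf : ((a.factorial : ℝ)) ≠ 0 := by positivity
  field_simp
  ring

theorem stmt_6 (m2 m3 : ℕ) (hm2 : 1 ≤ m2) (hm3 : 1 ≤ m3) :
    (c m2 m3 1) ^ 2 < 4 * c m2 m3 0 * c m2 m3 2 := by
  obtain ⟨b, rfl⟩ : ∃ b, m3 = b + 1 := ⟨m3 - 1, by omega⟩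
  have hy : (0:ℝ) ≤ (b:ℝ) := Nat.cast_nonneg b
  have hA : 0 < P b := P_pos b
  rcases Nat.lt_or_ge m2 2 with h | h
  · -- m2 = 1
    obtain rfl : m2 = 1 := by omega
    have e0 := L0 0 b
    have e1 := L1 0 b
    have e2 := L2a b
    norm_num at e0 e1
    rw [e0, e1, e2]
    have key : (0:ℝ) < P b ^ 4 * (27 + 84*(b:ℝ) + 94*(b:ℝ)^2 + 44*(b:ℝ)^3 + 7*(b:ℝ)^4) := by
      positivity
    nlinarith [key]
  · -- m2 = a + 2
    obtain ⟨a, rfl⟩ : ∃ a, m2 = a + 2 := ⟨m2 - 2, by omega⟩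
    have hx : (0:ℝ) ≤ (a:ℝ) := Nat.cast_nonneg a
    have e0 := L0 (a+1) b
    have e1 := L1 (a+1) b
    have e2 := L2b a b
    have ha : a + 1 + 1 = a + 2 := rfl
    rw [ha] at e0 e1
    push_cast at e0 e1
    rw [e0, e1, e2]
    set x := (a:ℝ)
    set y := (b:ℝ)
    set A := P b
    set B := ((a+2).factorial : ℝ) with hBdef
    have hB : (0:ℝ) < B := by rw [hBdef]; positivity
    have hq : (( y+1) * ((x+1)^2 - (x+1)*y - 1 - y))^2 <
        4 * ((x+1+1) * (y+1)) *
        (28 + 56*y + 34*y^2 + 6*y^3 + 32*x + 60*x*y + 33*x*y^2 + 5*x*y^3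
          + 13*x^2 + 22*x^2*y + 10*x^2*y^2 + x^2*y^3 + 2*x^3 + 3*x^3*y + x^3*y^2) := by
      nlinarith [mul_nonneg hx hy, mul_nonneg (mul_nonneg hx hx) hy,
        mul_nonneg hx (mul_nonneg hy hy), mul_nonneg (mul_nonneg hx hy) (mul_nonneg hx hy),
        mul_nonneg (mul_nonneg (mul_nonneg hx hx) hx) hy,
        mul_nonneg (mul_nonneg hx hx) (mul_nonneg hy hy),
        mul_nonneg hx (mul_nonneg hy (mul_nonneg hy hy)),
        mul_nonneg (mul_nonneg (mul_nonneg hx hy) (mul_nonneg hx hy)) hx,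
        mul_nonneg (mul_nonneg (mul_nonneg hx hy) (mul_nonneg hx hy)) hy,
        mul_nonneg (mul_nonneg (mul_nonneg hx hy) (mul_nonneg hx hy)) (mul_nonneg hx hx),
        mul_nonneg (mul_nonneg (mul_nonneg hx hy) (mul_nonneg hx hy)) (mul_nonneg hx hy),
        mul_nonneg (mul_nonneg (mul_nonneg hx hy) (mul_nonneg hx hy)) (mul_nonneg hy hy),
        mul_nonneg (mul_nonneg (mul_nonneg hx hy) (mul_nonneg hx hy)) (mul_nonneg (mul_nonneg hx hx) hy),
        mul_nonneg (mul_nonneg (mul_nonneg hx hy) (mul_nonneg hx hy)) (mul_nonneg hx (mul_nonneg hy hy)),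
        mul_nonneg (mul_nonneg (mul_nonneg hx hy) (mul_nonneg hx hy)) (mul_nonneg (mul_nonneg hx hx) (mul_nonneg hy hy)),
        mul_nonneg (mul_nonneg (mul_nonneg hx hy) (mul_nonneg hx hy)) (mul_nonneg (mul_nonneg hx hy) (mul_nonneg hx hy)),
        mul_nonneg (mul_nonneg (mul_nonneg hx hx) (mul_nonneg hx hx)) (mul_nonneg hy (mul_nonneg hy hy))]
    have hpos : (0:ℝ) < A^4 / B^4 := by positivity
    have h2 := mul_lt_mul_of_pos_left hq hpos
    calc (A ^ 2 * ((y+1) * ((x+1)^2 - (x+1)*y - 1 - y)) / B ^ 2) ^ 2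
        = A^4/B^4 * (((y+1) * ((x+1)^2 - (x+1)*y - 1 - y))^2) := by
          field_simp
      _ < A^4/B^4 * (4 * ((x+1+1) * (y+1)) *
          (28 + 56*y + 34*y^2 + 6*y^3 + 32*x + 60*x*y + 33*x*y^2 + 5*x*y^3
            + 13*x^2 + 22*x^2*y + 10*x^2*y^2 + x^2*y^3 + 2*x^3 + 3*x^3*y + x^3*y^2)) := h2
      _ = 4 * (A ^ 2 * ((x+1+1) * (y+1)) / B ^ 2) *
          (A ^ 2 * (28 + 56*y + 34*y^2 + 6*y^3 + 32*x + 60*x*y + 33*x*y^2 + 5*x*y^3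
            + 13*x^2 + 22*x^2*y + 10*x^2*y^2 + x^2*y^3 + 2*x^3 + 3*x^3*y + x^3*y^2) / B ^ 2) := by
          field_simp
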